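/- Let F be a finite set, Rob : Set F → Prop monotone with Rob F, c : F → ℝ≥0 a cost function, and F' ⊆ F a set of features. Define a modified cost c' by c'(w) = c(w) for w ∉ F' and c'(w') > ∑_{w ∈ F∖F'} c(w) for each w' ∈ F'. If E* minimizes c'-cost over robust explanations and E* ∩ F' ≠ ∅, then no robust explanation disjoint from F' exists (i.e., the exclude-constrained problem is infeasible). -/

import Mathlib

open Finset

theorem Finset.sum_le_sum_sdiff_of_disjoint {ι M : Type*} [Fintype ι] [DecidableEq ι]
    [AddCommMonoid M] [PartialOrder M] [CanonicallyOrderedAdd M] {c c' : ι → M} {S E : Finset ι}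
    (hcc' : ∀ w ∉ S, c' w = c w) (hE : Disjoint E S) :
    ∑ w ∈ E, c' w ≤ ∑ w ∈ univ \ S, c w :=
  calc ∑ w ∈ E, c' w = ∑ w ∈ E, c w := sum_congr rfl fun w hw => hcc' w (disjoint_left.mp hE hw)
    _ ≤ ∑ w ∈ univ \ S, c w := sum_le_sum_of_subset (subset_sdiff.mpr ⟨subset_univ E, hE⟩)

theorem stmt_8_general {F : Type*} [Fintype F] [DecidableEq F] (Rob : Finset F → Prop)
    (c c' : F → NNReal) (F' : Finset F)
    (hc'eq : ∀ w ∉ F', c' w = c w)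
    (hc'big : ∀ w' ∈ F', (∑ w ∈ Finset.univ \ F', c w) < c' w')
    (Estar : Finset F)
    (hmin : ∀ E : Finset F, Rob E → ∑ w ∈ Estar, c' w ≤ ∑ w ∈ E, c' w)
    (hinter : (Estar ∩ F').Nonempty) :
    ¬ ∃ E : Finset F, Rob E ∧ E ∩ F' = ∅ := by
  rintro ⟨E, hE, hEF'⟩
  obtain ⟨w', hw'⟩ := hinter
  obtain ⟨hw'Estar, hw'F'⟩ := mem_inter.mp hw'
  refine (hc'big w' hw'F').not_ge ?_
  calc c' w' ≤ ∑ w ∈ Estar, c' w := single_le_sum_of_canonicallyOrdered hw'Estar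
    _ ≤ ∑ w ∈ E, c' w := hmin E hE
    _ ≤ ∑ w ∈ univ \ F', c w :=
      sum_le_sum_sdiff_of_disjoint hc'eq (disjoint_iff_inter_eq_empty.mpr hEF')

theorem stmt_8 {F : Type*} [Fintype F] [DecidableEq F] (Rob : Finset F → Prop)
    (hmono : ∀ E E' : Finset F, E ⊆ E' → Rob E → Rob E')
    (hfull : Rob Finset.univ)
    (c c' : F → NNReal) (F' : Finset F)
    (hc'eq : ∀ w ∉ F', c' w = c w)
    (hc'big : ∀ w' ∈ F', (∑ w ∈ Finset.univ \ F', c w) < c' w')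
    (Estar : Finset F) (hrob : Rob Estar)
    (hmin : ∀ E : Finset F, Rob E → ∑ w ∈ Estar, c' w ≤ ∑ w ∈ E, c' w)
    (hinter : (Estar ∩ F').Nonempty) :
    ¬ ∃ E : Finset F, Rob E ∧ E ∩ F' = ∅ :=
  stmt_8_general Rob c c' F' hc'eq hc'big Estar hmin hinter
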